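/- Define for π ∈ S_n the weight w(π) := q^{N_{[1,2,3,4]}(π)} · Π_{i=1}^n x_i^{u_i(π)} y_i^{v_i(π)}, where u_i(π) = |{a<b<c : π_a = i < π_b < π_c}| and v_i(π) = |{a<b : π_a = i < π_b}|, and P_n(q; x; y) := Σ_{π ∈ S_n} w(π). Then P_n(q; x_1,...,x_n; y_1,...,y_n) = Σ_{i=1}^n y_i^{n-i} · P_{n-1}(q; x_1,...,x_{i-1}, q·x_{i+1},...,q·x_n; y_1,...,y_{i-1}, x_i·y_{i+1},..., x_i·y_n). -/
import Mathlib

open Finset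

/-- Number of occurrences of the increasing pattern [1,2,3,4] in `π`. -/
def N4 {n : ℕ} (π : Equiv.Perm (Fin n)) : ℕ :=
  (Finset.univ.filter fun t : Fin n × Fin n × Fin n × Fin n =>
    t.1 < t.2.1 ∧ t.2.1 < t.2.2.1 ∧ t.2.2.1 < t.2.2.2 ∧
      π t.1 < π t.2.1 ∧ π t.2.1 < π t.2.2.1 ∧ π t.2.2.1 < π t.2.2.2).card

/-- `u π i` = number of triples a < b < c with π(a) = i < π(b) < π(c). -/
def u {n : ℕ} (π : Equiv.Perm (Fin n)) (i : Fin n) : ℕ :=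
  (Finset.univ.filter fun t : Fin n × Fin n × Fin n =>
    t.1 < t.2.1 ∧ t.2.1 < t.2.2 ∧ π t.1 = i ∧ i < π t.2.1 ∧ π t.2.1 < π t.2.2).card

/-- `v π i` = number of pairs a < b with π(a) = i < π(b). -/
def v {n : ℕ} (π : Equiv.Perm (Fin n)) (i : Fin n) : ℕ :=
  (Finset.univ.filter fun p : Fin n × Fin n => p.1 < p.2 ∧ π p.1 = i ∧ i < π p.2).card

/-- The weight enumerator P_n(q; x_1,...,x_n; y_1,...,y_n) for the pattern [1,2,3,4]. -/
noncomputable def P (n : ℕ) (q : ℝ) (x y : Fin n → ℝ) : ℝ :=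
  ∑ π : Equiv.Perm (Fin n), q ^ N4 π * ∏ i, x i ^ u π i * y i ^ v π i

namespace NZaux

variable {n : ℕ}

lemma Fmap_inj (i : Fin (n+1)) (σ : Equiv.Perm (Fin n)) :
    Function.Injective (Fin.cons i (fun a => i.succAbove (σ a)) : Fin (n+1) → Fin (n+1)) := by
  intro a b h
  cases a using Fin.cases <;> cases b using Fin.cases <;>
    simp only [Fin.cons_zero, Fin.cons_succ] at h ⊢
  · exact absurd h (Fin.ne_succAbove _ _)
  · exact absurd h.symm (Fin.ne_succAbove _ _)
  · rw [Fin.succAbove_right_inj] at h; rw [σ.injective h]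

/-- Insert value `i` at the front: `π 0 = i`, `π (a+1) = i.succAbove (σ a)`. -/
noncomputable def Fmap (i : Fin (n+1)) (σ : Equiv.Perm (Fin n)) : Equiv.Perm (Fin (n+1)) :=
  Equiv.ofBijective _ (Finite.injective_iff_bijective.mp (Fmap_inj i σ))

@[simp] lemma Fmap_zero (i : Fin (n+1)) (σ : Equiv.Perm (Fin n)) : Fmap i σ 0 = i := by
  simp [Fmap]

@[simp] lemma Fmap_succ (i : Fin (n+1)) (σ : Equiv.Perm (Fin n)) (a : Fin n) :
    Fmap i σ a.succ = i.succAbove (σ a) := by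
  simp [Fmap]

lemma lt_succAbove_coe (p : Fin (n+1)) (k : Fin n) :
    p < p.succAbove k ↔ (p:ℕ) ≤ (k:ℕ) := by
  rw [Fin.lt_succAbove_iff_le_castSucc, Fin.le_def, Fin.coe_castSucc]

lemma Fmap_bijective :
    Function.Bijective (fun p : Fin (n+1) × Equiv.Perm (Fin n) => Fmap p.1 p.2) := by
  rw [Fintype.bijective_iff_injective_and_card]
  refine ⟨?_, ?_⟩
  · rintro ⟨i, σ⟩ ⟨i', σ'⟩ h
    simp only at h
    have h0 : i = i' := by
      have := congrArg (fun π : Equiv.Perm (Fin (n+1)) => π 0) h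
      simpa using this
    subst h0
    have hσ : σ = σ' := by
      ext a
      have := congrArg (fun π : Equiv.Perm (Fin (n+1)) => π a.succ) h
      simp only [Fmap_succ] at this
      have := Fin.succAbove_right_injective (p := i) this
      exact congrArg Fin.val this
    rw [hσ]
  · simp [Fintype.card_perm, Nat.factorial_succ]

variable (i : Fin (n+1)) (σ : Equiv.Perm (Fin n))

lemma v_succAbove (j : Fin n) : v (Fmap i σ) (i.succAbove j) = v σ j := by
  simp only [v, Finset.card_filter, Fintype.sum_prod_type]
  simp only [Fin.sum_univ_succ, Fmap_zero, Fmap_succ, Fin.ne_succAbove,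
    Fin.succAbove_right_inj, Fin.succAbove_lt_succAbove_iff, Fin.succ_lt_succ_iff,
    Fin.not_lt_zero, Fin.succ_pos, lt_succAbove_coe, false_and, and_false, if_false,
    true_and, ite_false, zero_add, add_zero, Finset.sum_const_zero, lt_self_iff_false]

lemma u_succAbove (j : Fin n) : u (Fmap i σ) (i.succAbove j) = u σ j := by
  simp only [u, Finset.card_filter, Fintype.sum_prod_type]
  simp only [Fin.sum_univ_succ, Fmap_zero, Fmap_succ, Fin.ne_succAbove,
    Fin.succAbove_right_inj, Fin.succAbove_lt_succAbove_iff, Fin.succ_lt_succ_iff,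
    Fin.not_lt_zero, Fin.succ_pos, lt_succAbove_coe, false_and, and_false, if_false,
    true_and, ite_false, zero_add, add_zero, Finset.sum_const_zero, lt_self_iff_false]

lemma v_pivot : v (Fmap i σ) i = n - (i : ℕ) := by
  have h1 : v (Fmap i σ) i = ∑ b : Fin n, if (i:ℕ) ≤ (σ b : ℕ) then 1 else 0 := by
    simp only [v, Finset.card_filter, Fintype.sum_prod_type]
    simp only [Fin.sum_univ_succ, Fmap_zero, Fmap_succ, Fin.ne_succAbove,
      Fin.succAbove_right_inj, Fin.succAbove_lt_succAbove_iff, Fin.succ_lt_succ_iff,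
      Fin.not_lt_zero, Fin.succ_pos, lt_succAbove_coe, false_and, and_false, if_false,
      true_and, ite_false, zero_add, add_zero, Finset.sum_const_zero, lt_self_iff_false,
      (Fin.ne_succAbove _ _).symm]
  rw [h1, Equiv.sum_comp σ (fun k : Fin n => if (i:ℕ) ≤ (k:ℕ) then 1 else 0)]
  rw [Fin.sum_univ_eq_sum_range (fun m => if (i:ℕ) ≤ m then 1 else 0) n]
  rw [Finset.sum_boole, Nat.cast_id]
  have h2 : (Finset.range n).filter (fun m => (i:ℕ) ≤ m) = Finset.Ico (i:ℕ) n := by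
    ext m
    simp only [Finset.mem_filter, Finset.mem_range, Finset.mem_Ico]
    tauto
  rw [h2, Nat.card_Ico]

lemma collapse_v :
    (∑ j : Fin n, if (i:ℕ) ≤ (j:ℕ) then v σ j else 0)
      = ∑ p : Fin n × Fin n,
          if p.1 < p.2 ∧ (i:ℕ) ≤ (σ p.1 : ℕ) ∧ σ p.1 < σ p.2 then 1 else 0 := by
  have step1 : ∀ j : Fin n, (if (i:ℕ) ≤ (j:ℕ) then v σ j else 0)
      = ∑ p : Fin n × Fin n,
          if (i:ℕ) ≤ (j:ℕ) ∧ p.1 < p.2 ∧ σ p.1 = j ∧ j < σ p.2 then 1 else 0 := by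
    intro j
    by_cases h : (i:ℕ) ≤ (j:ℕ)
    · rw [if_pos h, v, Finset.card_filter]
      exact Finset.sum_congr rfl fun p _ => by simp [h]
    · rw [if_neg h]
      symm
      exact Finset.sum_eq_zero fun p _ => by simp [h]
  rw [Finset.sum_congr rfl fun j _ => step1 j, Finset.sum_comm]
  refine Finset.sum_congr rfl fun p _ => ?_
  rw [Finset.sum_eq_single (σ p.1)]
  · exact if_congr (by constructor <;> (intro h; tauto)) rfl rfl
  · intro j _ hj
    rw [if_neg]
    rintro ⟨-, -, h, -⟩
    exact hj h.symm
  · intro h; exact absurd (Finset.mem_univ _) h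

lemma u_pivot : u (Fmap i σ) i = ∑ j : Fin n, if (i:ℕ) ≤ (j:ℕ) then v σ j else 0 := by
  rw [collapse_v]
  simp only [u, Finset.card_filter, Fintype.sum_prod_type]
  simp only [Fin.sum_univ_succ, Fmap_zero, Fmap_succ, Fin.ne_succAbove,
    Fin.succAbove_right_inj, Fin.succAbove_lt_succAbove_iff, Fin.succ_lt_succ_iff,
    Fin.not_lt_zero, Fin.succ_pos, lt_succAbove_coe, false_and, and_false, if_false,
    true_and, ite_false, zero_add, add_zero, Finset.sum_const_zero, lt_self_iff_false,
    (Fin.ne_succAbove _ _).symm]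

lemma collapse_u :
    (∑ j : Fin n, if (i:ℕ) ≤ (j:ℕ) then u σ j else 0)
      = ∑ t : Fin n × Fin n × Fin n,
          if t.1 < t.2.1 ∧ t.2.1 < t.2.2 ∧ (i:ℕ) ≤ (σ t.1 : ℕ) ∧ σ t.1 < σ t.2.1 ∧
            σ t.2.1 < σ t.2.2 then 1 else 0 := by
  have step1 : ∀ j : Fin n, (if (i:ℕ) ≤ (j:ℕ) then u σ j else 0)
      = ∑ t : Fin n × Fin n × Fin n,
          if (i:ℕ) ≤ (j:ℕ) ∧ t.1 < t.2.1 ∧ t.2.1 < t.2.2 ∧ σ t.1 = j ∧ j < σ t.2.1 ∧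
            σ t.2.1 < σ t.2.2 then 1 else 0 := by
    intro j
    by_cases h : (i:ℕ) ≤ (j:ℕ)
    · rw [if_pos h, u, Finset.card_filter]
      exact Finset.sum_congr rfl fun t _ => by simp [h]
    · rw [if_neg h]
      symm
      exact Finset.sum_eq_zero fun t _ => by simp [h]
  rw [Finset.sum_congr rfl fun j _ => step1 j, Finset.sum_comm]
  refine Finset.sum_congr rfl fun t _ => ?_
  rw [Finset.sum_eq_single (σ t.1)]
  · exact if_congr (by constructor <;> (intro h; tauto)) rfl rfl
  · intro j _ hj
    rw [if_neg]
    rintro ⟨-, -, -, h, -⟩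
    exact hj h.symm
  · intro h; exact absurd (Finset.mem_univ _) h

lemma N4_Fmap : N4 (Fmap i σ) = N4 σ + ∑ j : Fin n, if (i:ℕ) ≤ (j:ℕ) then u σ j else 0 := by
  rw [collapse_u]
  simp only [N4, Finset.card_filter, Fintype.sum_prod_type]
  simp only [Fin.sum_univ_succ, Fmap_zero, Fmap_succ, Fin.ne_succAbove,
    Fin.succAbove_right_inj, Fin.succAbove_lt_succAbove_iff, Fin.succ_lt_succ_iff,
    Fin.not_lt_zero, Fin.succ_pos, lt_succAbove_coe, false_and, and_false, if_false,
    true_and, ite_false, zero_add, add_zero, Finset.sum_const_zero, lt_self_iff_false]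
  exact Nat.add_comm _ _

end NZaux

open NZaux
theorem noonan_zeilberger_functional_equation_1234 (n : ℕ) (q : ℝ)
    (x y : Fin (n + 1) → ℝ) :
    P (n + 1) q x y =
      ∑ i : Fin (n + 1), y i ^ (n - (i : ℕ)) *
        P n q
          (fun j : Fin n => if (j : ℕ) < (i : ℕ) then x j.castSucc else q * x j.succ)
          (fun j : Fin n => if (j : ℕ) < (i : ℕ) then y j.castSucc else x i * y j.succ) := by
  rw [P, ← Function.Bijective.sum_comp Fmap_bijective
      (fun π => q ^ N4 π * ∏ k, x k ^ u π k * y k ^ v π k), Fintype.sum_prod_type]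
  refine Finset.sum_congr rfl fun i _ => ?_
  rw [P, Finset.mul_sum]
  refine Finset.sum_congr rfl fun σ _ => ?_
  simp only
  have hXY : ∀ j : Fin n,
      (if (j:ℕ) < (i:ℕ) then x j.castSucc else q * x j.succ) ^ u σ j *
        (if (j:ℕ) < (i:ℕ) then y j.castSucc else x i * y j.succ) ^ v σ j
      = q ^ (if (i:ℕ) ≤ (j:ℕ) then u σ j else 0) *
          x i ^ (if (i:ℕ) ≤ (j:ℕ) then v σ j else 0) *
          (x (i.succAbove j) ^ u σ j * y (i.succAbove j) ^ v σ j) := by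
    intro j
    rcases lt_or_ge (j:ℕ) (i:ℕ) with h | h
    · rw [if_pos h, if_pos h, if_neg (not_le.mpr h), if_neg (not_le.mpr h),
        Fin.succAbove_of_castSucc_lt _ _ (by rw [Fin.lt_def, Fin.coe_castSucc]; exact h)]
      simp [pow_zero]
    · rw [if_neg (not_lt.mpr h), if_neg (not_lt.mpr h), if_pos h, if_pos h,
        Fin.succAbove_of_le_castSucc _ _ (by rw [Fin.le_def, Fin.coe_castSucc]; exact h),
        mul_pow, mul_pow]
      ring
  have hprod : (∏ j : Fin n,
        (if (j:ℕ) < (i:ℕ) then x j.castSucc else q * x j.succ) ^ u σ j *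
          (if (j:ℕ) < (i:ℕ) then y j.castSucc else x i * y j.succ) ^ v σ j)
      = q ^ (∑ j : Fin n, if (i:ℕ) ≤ (j:ℕ) then u σ j else 0) *
          x i ^ (∑ j : Fin n, if (i:ℕ) ≤ (j:ℕ) then v σ j else 0) *
          ∏ j : Fin n, x (i.succAbove j) ^ u σ j * y (i.succAbove j) ^ v σ j := by
    rw [Finset.prod_congr rfl fun j _ => hXY j, Finset.prod_mul_distrib,
      Finset.prod_mul_distrib, Finset.prod_pow_eq_pow_sum, Finset.prod_pow_eq_pow_sum]
  rw [hprod, N4_Fmap i σ,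
    Fin.prod_univ_succAbove (fun k => x k ^ u (Fmap i σ) k * y k ^ v (Fmap i σ) k) i]
  simp only [u_succAbove, v_succAbove, u_pivot, v_pivot]
  rw [pow_add]
  ring
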